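/- arXiv:1008.1894 — 2 statements merged into one kernel-verified Lean document; each statement's English description precedes it below -/
import Mathlib

section
/- For every n ∈ ℕ, every x ∈ ℝ, and every h ∈ ℂ with Re(h) > 1, the (h,q)-Bernoulli polynomial satisfies the binomial expansion β_{n,q}^h(x) = Σ_{l=0}^{n} C(n,l) · q^{lx} · β_{l,q}^h · [x]_q^{n−l}, where β_{l,q}^h = β_{l,q}^h(0). -/
open Complex Finset Filter

/-- Complex power `q^z := exp(z·log q)` for a real base `q`. -/
noncomputable def qcpow (q : ℝ) (z : ℂ) : ℂ := Complex.exp (z * (Real.log q : ℂ))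

/-- The complex `q`-number `[z]_q = (1 - q^z)/(1 - q)`. -/
noncomputable def qnum (q : ℝ) (z : ℂ) : ℂ := (1 - qcpow q z) / (1 - (q : ℂ))

/-- The real `q`-number `[y]_q = (1 - q^y)/(1 - q)` for real `y`. -/
noncomputable def qnumR (q : ℝ) (y : ℝ) : ℝ := (1 - Real.exp (y * Real.log q)) / (1 - q)

/-- The `(h,q)`-Bernoulli polynomial
`β_{n,q}^h(x) = (1-q)^{-n} ∑_{l=0}^{n} C(n,l) (-1)^l q^{lx} (l+h-1)/[l+h-1]_q`. -/
noncomputable def qbeta (q : ℝ) (h : ℂ) (n : ℕ) (x : ℝ) : ℂ :=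
  (1 - (q : ℂ))⁻¹ ^ n * ∑ l ∈ Finset.range (n + 1),
    (n.choose l : ℂ) * (-1) ^ l * qcpow q ((l : ℂ) * (x : ℂ)) *
      (((l : ℂ) + h - 1) / qnum q ((l : ℂ) + h - 1))

/-!
Write `Q = q^x`, `c = (1 - q)⁻¹` and `a_j = (-1)^j (j+h-1)/[j+h-1]_q`, so that
`β_{n,q}^h(x) = c^n ∑_j C(n,j) Q^j a_j`, `β_{l,q}^h = c^l ∑_j C(l,j) a_j` and `[x]_q = c (1 - Q)`.
After cancelling `c^n`, the claim is the case `y = 1 - Q` of the identity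
`∑_l C(n,l) Q^l y^(n-l) ∑_j C(l,j) a_j = ∑_j C(n,j) Q^j (Q + y)^(n-j) a_j`,
which follows from `C(n,l) C(l,j) = C(n,j) C(n-j,l-j)` and the binomial theorem.
-/

open Finset

theorem sum_choose_mul_choose_mul_pow {R : Type*} [CommSemiring R] (x y : R) {j n : ℕ}
    (hjn : j ≤ n) :
    ∑ l ∈ range (n + 1), (n.choose l * l.choose j : R) * x ^ l * y ^ (n - l) =
      n.choose j * x ^ j * (x + y) ^ (n - j) := by
  obtain ⟨m, rfl⟩ := Nat.exists_eq_add_of_le hjn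
  have hlow : ∀ l ∈ range j,
      ((j + m).choose l * l.choose j : R) * x ^ l * y ^ (j + m - l) = 0 := by
    intro l hl
    simp [Nat.choose_eq_zero_of_lt (mem_range.1 hl)]
  rw [add_assoc, sum_range_add, sum_eq_zero hlow, zero_add, Nat.add_sub_cancel_left, add_pow,
    mul_sum]
  refine sum_congr rfl fun i _ => ?_
  have hchoose := Nat.choose_mul (n := j + m) (Nat.le_add_right j i)
  simp only [Nat.add_sub_cancel_left] at hchoose
  rw [← Nat.cast_mul, hchoose, Nat.cast_mul, Nat.add_sub_add_left, pow_add]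
  ring

theorem sum_choose_mul_pow_mul_sum_choose {R : Type*} [CommSemiring R] (x y : R) (a : ℕ → R)
    (n : ℕ) :
    ∑ l ∈ range (n + 1), n.choose l * x ^ l * y ^ (n - l) * ∑ j ∈ range (l + 1), l.choose j * a j =
      ∑ j ∈ range (n + 1), n.choose j * x ^ j * (x + y) ^ (n - j) * a j := by
  have hextend : ∀ l ∈ range (n + 1),
      ∑ j ∈ range (l + 1), (l.choose j : R) * a j = ∑ j ∈ range (n + 1), l.choose j * a j := by
    intro l hl
    refine sum_subset (range_subset_range.2 (by simpa using hl)) fun j _ hj => ?_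
    simp [Nat.choose_eq_zero_of_lt (by simpa using hj : l < j)]
  rw [sum_congr rfl fun l hl => by rw [hextend l hl]]
  simp_rw [mul_sum]
  rw [sum_comm]
  refine sum_congr rfl fun j hj => ?_
  rw [← sum_choose_mul_choose_mul_pow x y (Nat.lt_succ_iff.1 (mem_range.1 hj)), sum_mul]
  exact sum_congr rfl fun l _ => by ring

theorem qcpow_nat_mul (q : ℝ) (l : ℕ) (z : ℂ) : qcpow q (l * z) = qcpow q z ^ l := by
  rw [qcpow, qcpow, mul_assoc, Complex.exp_nat_mul]

theorem qcpow_ofReal_zero (q : ℝ) : qcpow q ((0 : ℝ) : ℂ) = 1 := by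
  simp [qcpow]

theorem qbeta_eq_sum (q : ℝ) (h : ℂ) (n : ℕ) (x : ℝ) :
    qbeta q h n x = (1 - (q : ℂ))⁻¹ ^ n * ∑ l ∈ range (n + 1),
      n.choose l * qcpow q x ^ l * ((-1) ^ l * ((l + h - 1) / qnum q (l + h - 1))) := by
  rw [qbeta]
  congr 1
  exact sum_congr rfl fun l _ => by rw [qcpow_nat_mul]; ring

theorem qbeta_binomial_expansion_general (q : ℝ) (h : ℂ) (n : ℕ) (x : ℝ) :
    qbeta q h n x = ∑ l ∈ Finset.range (n + 1),
      (n.choose l : ℂ) * qcpow q ((l : ℂ) * (x : ℂ)) * qbeta q h l 0 *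
        qnum q (x : ℂ) ^ (n - l) := by
  set c := (1 - (q : ℂ))⁻¹
  set Q := qcpow q x
  set a : ℕ → ℂ := fun j => (-1) ^ j * ((j + h - 1) / qnum q (j + h - 1))
  have hqnum : qnum q x = (1 - Q) * c := div_eq_mul_inv _ _
  calc qbeta q h n x
      = c ^ n * ∑ j ∈ range (n + 1), n.choose j * Q ^ j * (Q + (1 - Q)) ^ (n - j) * a j := by
        simp only [qbeta_eq_sum, add_sub_cancel, one_pow, mul_one]
        rfl
    _ = c ^ n * ∑ l ∈ range (n + 1),
          n.choose l * Q ^ l * (1 - Q) ^ (n - l) * ∑ j ∈ range (l + 1), l.choose j * a j := by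
        rw [sum_choose_mul_pow_mul_sum_choose]
    _ = _ := by
        rw [mul_sum]
        refine sum_congr rfl fun l hl => ?_
        rw [qcpow_nat_mul, qbeta_eq_sum, qcpow_ofReal_zero, hqnum,
          ← pow_mul_pow_sub c (Nat.lt_succ_iff.1 (mem_range.1 hl))]
        simp only [one_pow, mul_one, mul_pow]
        ring

/-- binomial expansion
`β_{n,q}^h(x) = ∑_{l=0}^{n} C(n,l) q^{lx} β_{l,q}^h [x]_q^{n-l}`. -/
theorem qbeta_binomial_expansion (q : ℝ) (hq0 : 0 < q) (hq1 : q < 1)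
    (h : ℂ) (hh : 1 < h.re) (n : ℕ) (x : ℝ) :
    qbeta q h n x = ∑ l ∈ Finset.range (n + 1),
      (n.choose l : ℂ) * qcpow q ((l : ℂ) * (x : ℂ)) * qbeta q h l 0 *
        qnum q (x : ℂ) ^ (n - l) :=
  qbeta_binomial_expansion_general q h n x
end

section
/- For every k ∈ ℕ with k ≥ 1 and every h ∈ ℂ with Re(h) > 1, the series below converge absolutely and the (h,q)-Bernoulli number satisfies β_{k,q}^h = −k · Σ_{n=0}^{∞} q^{hn}·[n]_q^{k−1} + (h−1)(1−q) · Σ_{n=0}^{∞} q^{(h−1)n}·[n]_q^{k}, where in the n = 0 term the convention [0]_q^{0} = 1 is used (i.e. 0^0 = 1). -/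
open Complex Finset Filter

/-! For `Re w > 0` one has `w / [w]_q = (1 - q) w ∑ₙ q^{wn}`, so `β_{k,q}^h` is a double
sum over `l ≤ k` and `n ≥ 0`. Exchanging the two sums, the inner sum
`∑ₗ C(k,l) (-1)^l (l + h - 1) q^{nl}` is `-k q^n (1 - q^n)^{k-1} + (h - 1) (1 - q^n)^k` by the
binomial theorem and its derivative, and `1 - q^n = (1 - q) [n]_q` turns the two pieces into
the two series. -/

section BinomialSums

variable {R : Type*} [CommRing R]

theorem sum_range_choose_mul_neg_one_pow_mul_pow (k : ℕ) (x : R) :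
    ∑ l ∈ range (k + 1), (k.choose l : R) * (-1) ^ l * x ^ l = (1 - x) ^ k := by
  rw [sub_eq_neg_add, add_pow]
  exact sum_congr rfl fun l _ => by rw [neg_pow, one_pow, mul_one]; ring

theorem sum_range_choose_mul_neg_one_pow_mul_natCast_mul_pow (k : ℕ) (x : R) :
    ∑ l ∈ range (k + 2), ((k + 1).choose l : R) * (-1) ^ l * l * x ^ l
      = -(k + 1) * x * (1 - x) ^ k := by
  have hshift (i : ℕ) : ((k + 1).choose (i + 1) : R) * (-1) ^ (i + 1) * ↑(i + 1) * x ^ (i + 1)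
      = -(k + 1) * x * ((k.choose i : R) * (-1) ^ i * x ^ i) := by
    have hchoose : ((k + 1).choose (i + 1) : R) * ↑(i + 1) = (k + 1) * k.choose i := by
      exact_mod_cast congrArg (Nat.cast : ℕ → R) (Nat.add_one_mul_choose_eq k i).symm
    linear_combination (-1) ^ (i + 1) * x ^ (i + 1) * hchoose
  rw [sum_range_succ', sum_congr rfl fun i _ => hshift i, ← mul_sum,
    sum_range_choose_mul_neg_one_pow_mul_pow]
  simp

theorem sum_range_choose_mul_neg_one_pow_mul_add_mul_pow (k : ℕ) (c x : R) :
    ∑ l ∈ range (k + 2), ((k + 1).choose l : R) * (-1) ^ l * (l + c) * x ^ l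
      = -(k + 1) * x * (1 - x) ^ k + c * (1 - x) ^ (k + 1) := by
  simp only [mul_add, add_mul, sum_add_distrib]
  rw [sum_range_choose_mul_neg_one_pow_mul_natCast_mul_pow,
    ← sum_range_choose_mul_neg_one_pow_mul_pow (k + 1), mul_sum]
  congr 1
  exact sum_congr rfl fun l _ => by ring

end BinomialSums

theorem qcpow_add (q : ℝ) (z w : ℂ) : qcpow q (z + w) = qcpow q z * qcpow q w := by
  simp [qcpow, add_mul, Complex.exp_add]

theorem qcpow_mul_natCast (q : ℝ) (z : ℂ) (n : ℕ) : qcpow q (z * n) = qcpow q z ^ n := by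
  rw [qcpow, qcpow, ← Complex.exp_nat_mul]
  ring_nf

theorem norm_qcpow (q : ℝ) (z : ℂ) : ‖qcpow q z‖ = Real.exp (z.re * Real.log q) := by
  simp [qcpow, Complex.norm_exp, Complex.mul_re]

theorem norm_qcpow_lt_one {q : ℝ} (hq0 : 0 < q) (hq1 : q < 1) {z : ℂ} (hz : 0 < z.re) :
    ‖qcpow q z‖ < 1 := by
  rw [norm_qcpow, Real.exp_lt_one_iff]
  exact mul_neg_of_pos_of_neg hz (Real.log_neg hq0 hq1)

theorem ofReal_qnumR_natCast (q : ℝ) (n : ℕ) :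
    (qnumR q n : ℂ) = (1 - qcpow q n) / (1 - q) := by
  simp [qnumR, qcpow]

theorem abs_qnumR_le {q : ℝ} (hq0 : 0 < q) (hq1 : q < 1) {y : ℝ} (hy : 0 ≤ y) :
    |qnumR q y| ≤ (1 - q)⁻¹ := by
  have hpow : Real.exp (y * Real.log q) ≤ 1 :=
    Real.exp_le_one_iff.2 (mul_nonpos_of_nonneg_of_nonpos hy (Real.log_neg hq0 hq1).le)
  rw [qnumR, div_eq_mul_inv, abs_mul, abs_of_pos (inv_pos.2 (sub_pos.2 hq1)),
    abs_of_nonneg (sub_nonneg.2 hpow)]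
  exact mul_le_of_le_one_left (inv_pos.2 (sub_pos.2 hq1)).le
    (by linarith [Real.exp_pos (y * Real.log q)])

theorem summable_qcpow_mul_qnumR_pow {q : ℝ} (hq0 : 0 < q) (hq1 : q < 1) {z : ℂ} (hz : 0 < z.re)
    (m : ℕ) : Summable fun n : ℕ => qcpow q (z * n) * (qnumR q n : ℂ) ^ m := by
  refine Summable.of_norm_bounded
    ((summable_geometric_of_lt_one (norm_nonneg _) (norm_qcpow_lt_one hq0 hq1 hz)).mul_left
      ((1 - q)⁻¹ ^ m)) fun n => ?_
  rw [norm_mul, norm_pow, qcpow_mul_natCast, norm_pow, mul_comm, Complex.norm_real]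
  gcongr
  exact abs_qnumR_le hq0 hq1 n.cast_nonneg

theorem inv_qnum_eq_tsum {q : ℝ} (hq0 : 0 < q) (hq1 : q < 1) {w : ℂ} (hw : 0 < w.re) :
    (qnum q w)⁻¹ = (1 - q) * ∑' n : ℕ, qcpow q w ^ n := by
  rw [qnum, inv_div, tsum_geometric_of_norm_lt_one (norm_qcpow_lt_one hq0 hq1 hw), div_eq_mul_inv]

theorem qcpow_natCast_add_sub_one_pow (q : ℝ) (h : ℂ) (l n : ℕ) :
    qcpow q (l + h - 1) ^ n = qcpow q n ^ l * qcpow q ((h - 1) * n) := by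
  rw [← qcpow_mul_natCast, ← qcpow_mul_natCast, ← qcpow_add]
  ring_nf

theorem qbeta_zero_eq_tsum_sum {q : ℝ} (hq0 : 0 < q) (hq1 : q < 1) {h : ℂ} (hh : 1 < h.re)
    (k : ℕ) :
    qbeta q h k 0 = ∑' n : ℕ, (1 - (q : ℂ))⁻¹ ^ k * (1 - q) * qcpow q ((h - 1) * n) *
      ∑ l ∈ range (k + 1), (k.choose l : ℂ) * (-1) ^ l * (l + h - 1) * qcpow q n ^ l := by
  have hre (l : ℕ) : 0 < ((l : ℂ) + h - 1).re := by
    simp only [sub_re, add_re, natCast_re, one_re]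
    linarith [(l.cast_nonneg : (0 : ℝ) ≤ l)]
  have hterm (l : ℕ) : (k.choose l : ℂ) * (-1) ^ l * qcpow q (l * (0 : ℝ)) *
      ((l + h - 1) / qnum q (l + h - 1)) = ∑' n : ℕ,
        (k.choose l : ℂ) * (-1) ^ l * (l + h - 1) * (1 - q) * qcpow q (l + h - 1) ^ n := by
    rw [div_eq_mul_inv, inv_qnum_eq_tsum hq0 hq1 (hre l), tsum_mul_left]
    simp only [ofReal_zero, mul_zero, qcpow, zero_mul, Complex.exp_zero]
    ring
  rw [qbeta, sum_congr rfl fun l _ => hterm l, ← Summable.tsum_finsetSum fun l _ =>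
    (summable_geometric_of_norm_lt_one (norm_qcpow_lt_one hq0 hq1 (hre l))).mul_left _,
    ← tsum_mul_left]
  refine tsum_congr fun n => ?_
  simp only [mul_sum, qcpow_natCast_add_sub_one_pow]
  exact sum_congr rfl fun l _ => by ring

theorem qbeta_zero_summand_eq {q : ℝ} (hq1 : q ≠ 1) (h : ℂ) (m n : ℕ) :
    (1 - (q : ℂ))⁻¹ ^ (m + 1) * (1 - q) * qcpow q ((h - 1) * n) *
      ∑ l ∈ range (m + 2), ((m + 1).choose l : ℂ) * (-1) ^ l * (l + h - 1) * qcpow q n ^ l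
      = -((m + 1 : ℕ) : ℂ) * (qcpow q (h * n) * (qnumR q n : ℂ) ^ m) +
        (h - 1) * (1 - q) * (qcpow q ((h - 1) * n) * (qnumR q n : ℂ) ^ (m + 1)) := by
  have hq : (1 : ℂ) - q ≠ 0 := sub_ne_zero.2 (by exact_mod_cast hq1.symm)
  simp_rw [add_sub_assoc, sum_range_choose_mul_neg_one_pow_mul_add_mul_pow,
    ofReal_qnumR_natCast, show h * n = n + (h - 1) * n by ring, qcpow_add]
  generalize qcpow q n = x, qcpow q ((h - 1) * n) = u, 1 - (q : ℂ) = c at hq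
  push_cast
  rw [div_pow, div_pow]
  linear_combination (-(m + 1) * x * u * (1 - x) ^ m * c⁻¹ ^ m) * mul_inv_cancel₀ hq

/-- series representation of the `(h,q)`-Bernoulli number `β_{k,q}^h`
(with the convention `[0]_q^0 = 1`, i.e. `0^0 = 1`). -/
theorem qbeta_number_eq_tsum (q : ℝ) (hq0 : 0 < q) (hq1 : q < 1)
    (h : ℂ) (hh : 1 < h.re) (k : ℕ) (hk : 1 ≤ k) :
    Summable (fun n : ℕ => qcpow q (h * (n : ℂ)) * ((qnumR q (n : ℝ) : ℂ) ^ (k - 1))) ∧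
    Summable (fun n : ℕ => qcpow q ((h - 1) * (n : ℂ)) * ((qnumR q (n : ℝ) : ℂ) ^ k)) ∧
    qbeta q h k 0 =
      -(k : ℂ) * ∑' n : ℕ, qcpow q (h * (n : ℂ)) * ((qnumR q (n : ℝ) : ℂ) ^ (k - 1)) +
      (h - 1) * (1 - (q : ℂ)) *
        ∑' n : ℕ, qcpow q ((h - 1) * (n : ℂ)) * ((qnumR q (n : ℝ) : ℂ) ^ k) := by
  obtain ⟨m, rfl⟩ := Nat.exists_eq_add_of_le' hk
  have hS1 := summable_qcpow_mul_qnumR_pow hq0 hq1 (z := h) (by linarith) m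
  have hS2 := summable_qcpow_mul_qnumR_pow hq0 hq1 (z := h - 1)
    (by rw [sub_re, one_re]; linarith) (m + 1)
  refine ⟨hS1, hS2, ?_⟩
  rw [Nat.add_sub_cancel, qbeta_zero_eq_tsum_sum hq0 hq1 hh, ← tsum_mul_left, ← tsum_mul_left,
    ← (hS1.mul_left _).tsum_add (hS2.mul_left _)]
  exact tsum_congr (qbeta_zero_summand_eq hq1.ne h m)
end
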